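/- arXiv:2204.04015 — 2 statements merged into one kernel-verified Lean document; each statement's English description precedes it below -/
import Mathlib

section
/- Let α ≥ 0 be an integer and β > −1 a real number. For every x with 0 ≤ x < 1, the series Σ_{n=1}^{∞} ((α+β+1)_n/(n·(β+1)_n)) x^n converges and equals Σ_{ℓ=1}^{α} binom(α,ℓ) · (ℓ−1)!/((β+α+1−ℓ)_ℓ) · (1−x)^{−ℓ} − log(1−x) − (ψ(β+α+1) − ψ(β+1)). -/
open Finset Real

/-- The Pochhammer symbol `(x)_n = x (x+1) ⋯ (x+n-1)`. -/
noncomputable def poch (x : ℝ) (n : ℕ) : ℝ := (ascPochhammer ℝ n).eval x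

/-- The digamma function `ψ = Γ'/Γ`. -/
noncomputable def digamma (x : ℝ) : ℝ := deriv Real.Gamma x / Real.Gamma x

/-!
Put `b = β + 1`. The Chu–Vandermonde identity for rising factorials gives
`(α + b)_m / (b)_m = Σ_{ℓ ≤ α} C(α, ℓ) (m)_ℓ / (b + α - ℓ)_ℓ`, so for `m = n + 1` the `n`-th
coefficient is `1 / (n + 1)` plus a combination of `(n + 1)_ℓ / (n + 1) = (ℓ - 1)! C(n + ℓ, ℓ - 1)`,
`1 ≤ ℓ ≤ α`. Termwise summation yields `-log (1 - x)` and `(ℓ - 1)! ((1 - x)^{-ℓ} - 1)`. The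
constants left over add up to `Σ_{j < α} 1 / (b + j) = ψ(b + α) - ψ(b)`; this harmonic identity is
proved by induction on `α` through Pascal's rule, the new terms being summed by Vandermonde again.
-/

open scoped Nat

@[simp] lemma poch_zero (a : ℝ) : poch a 0 = 1 := by simp [poch]

@[simp] lemma poch_one (a : ℝ) : poch a 1 = a := by simp [poch]

lemma poch_succ (a : ℝ) (n : ℕ) : poch a (n + 1) = poch a n * (a + n) := by
  simp [poch, ascPochhammer_succ_right]

lemma poch_pos {a : ℝ} (ha : 0 < a) (n : ℕ) : 0 < poch a n := ascPochhammer_pos n a ha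

lemma poch_add (a : ℝ) (m k : ℕ) : poch a (m + k) = poch a m * poch (a + m) k := by
  simp [poch, ← ascPochhammer_mul, Polynomial.eval_comp]

@[simp] lemma poch_one_left (k : ℕ) : poch 1 k = k ! := ascPochhammer_eval_one ℝ k

lemma poch_natCast_add_one (m k : ℕ) : poch (m + 1) k = k ! * (m + k).choose k := by
  have h := factorial_mul_ascPochhammer ℝ m k
  rw [← Nat.choose_mul_factorial_mul_factorial (Nat.le_add_left k m), Nat.add_sub_cancel] at h
  push_cast at h
  have : (m ! : ℝ) ≠ 0 := by positivity
  unfold poch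
  apply mul_left_cancel₀ this
  linear_combination h

lemma poch_add_antidiagonal (a b : ℝ) (n : ℕ) :
    poch (a + b) n = ∑ ij ∈ antidiagonal n, (n.choose ij.1 : ℝ) * (poch a ij.1 * poch b ij.2) := by
  induction n with
  | zero => simp
  | succ n ih =>
    rw [Finset.sum_antidiagonal_choose_succ_mul (fun i j => poch a i * poch b j), poch_succ, ih,
      sum_mul, ← sum_add_distrib]
    refine sum_congr rfl fun ij hij => ?_
    rw [HasAntidiagonal.mem_antidiagonal] at hij
    rw [Nat.choose_symm_of_eq_add hij.symm, poch_succ, poch_succ, ← hij]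
    push_cast
    ring

lemma poch_add_eq_sum_range (a b : ℝ) (n : ℕ) :
    poch (a + b) n = ∑ k ∈ range (n + 1), (n.choose k : ℝ) * (poch a k * poch b (n - k)) := by
  rw [poch_add_antidiagonal, Nat.sum_antidiagonal_eq_sum_range_succ
    (fun i j => (n.choose i : ℝ) * (poch a i * poch b j))]

lemma poch_eq_mul_poch_sub (c : ℝ) {k n : ℕ} (h : k ≤ n) :
    poch c n = poch c (n - k) * poch (c + n - k) k := by
  conv_lhs => rw [← Nat.sub_add_cancel h]
  rw [poch_add, Nat.cast_sub h, add_sub_assoc]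

lemma poch_natCast_add_div_poch (α m : ℕ) {b : ℝ} (hb : 0 < b) :
    poch (α + b) m / poch b m
      = ∑ ℓ ∈ range (α + 1), (α.choose ℓ : ℝ) / poch (b + α - ℓ) ℓ * poch m ℓ := by
  have hswap : poch (α + b) m * poch b α = poch b m * poch (m + b) α := by
    rw [mul_comm, add_comm (α : ℝ), add_comm (m : ℝ), ← poch_add, ← poch_add, add_comm]
  have hbα := poch_pos hb α
  calc poch (α + b) m / poch b m = poch (m + b) α / poch b α := by
        rw [div_eq_div_iff (poch_pos hb m).ne' hbα.ne', hswap, mul_comm]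
    _ = ∑ ℓ ∈ range (α + 1), (α.choose ℓ : ℝ) * (poch m ℓ * poch b (α - ℓ)) / poch b α := by
        rw [poch_add_eq_sum_range, sum_div]
    _ = _ := by
        refine sum_congr rfl fun ℓ hℓ => ?_
        have := poch_pos hb (α - ℓ)
        rw [poch_eq_mul_poch_sub b (Nat.lt_succ_iff.mp (mem_range.mp hℓ))]
        field_simp

lemma sum_choose_mul_factorial_div_poch_succ (α : ℕ) {c : ℝ} (hc : 0 < c) :
    ∑ k ∈ range (α + 1), (α.choose k : ℝ) * k ! / poch (c + α - k) (k + 1) = 1 / c := by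
  have hsplit : ∀ k ∈ range (α + 1),
      poch c (α + 1) = poch c (α - k) * poch (c + α - k) (k + 1) := by
    intro k hk
    have hk : k + 1 ≤ α + 1 := by simpa using hk
    rw [poch_eq_mul_poch_sub c hk, Nat.add_sub_add_right]
    congr 2
    push_cast
    ring
  have hvdm : poch (1 + c) α = ∑ k ∈ range (α + 1), (α.choose k : ℝ) * (k ! * poch c (α - k)) := by
    simp [poch_add_eq_sum_range]
  have hc1 : poch c (α + 1) = c * poch (1 + c) α := by
    rw [add_comm α, poch_add, poch_one, Nat.cast_one, add_comm c]
  have hpos := poch_pos (by linarith : 0 < 1 + c) α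
  rw [← mul_right_inj' (poch_pos hc (α + 1)).ne', mul_sum]
  calc ∑ k ∈ range (α + 1), poch c (α + 1) * ((α.choose k : ℝ) * k ! / poch (c + α - k) (k + 1))
      = ∑ k ∈ range (α + 1), (α.choose k : ℝ) * (k ! * poch c (α - k)) := by
        refine sum_congr rfl fun k hk => ?_
        have hkα : (k : ℝ) ≤ α := by exact_mod_cast Nat.lt_succ_iff.mp (mem_range.mp hk)
        have := poch_pos (by linarith : 0 < c + α - k) (k + 1)
        rw [hsplit k hk]
        field_simp
    _ = poch c (α + 1) * (1 / c) := by rw [← hvdm, hc1]; field_simp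

lemma sum_choose_succ_mul_factorial_div_poch (α : ℕ) {c : ℝ} (hc : 0 < c) :
    ∑ k ∈ range α, (α.choose (k + 1) : ℝ) * k ! / poch (c + α - (k + 1)) (k + 1)
      = ∑ j ∈ range α, 1 / (c + j) := by
  induction α generalizing c with
  | zero => simp
  | succ α ih =>
    have hpascal : ∀ k ∈ range (α + 1),
        ((α + 1).choose (k + 1) : ℝ) * k ! / poch (c + (α + 1 : ℕ) - (k + 1)) (k + 1)
          = (α.choose k : ℝ) * k ! / poch (c + α - k) (k + 1)
            + (α.choose (k + 1) : ℝ) * k ! / poch ((c + 1) + α - (k + 1)) (k + 1) := by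
      intro k _
      rw [Nat.choose_succ_succ', Nat.cast_add, add_mul, add_div,
        show c + ((α + 1 : ℕ) : ℝ) - (k + 1) = c + α - k by push_cast; ring,
        show c + 1 + α - (k + 1) = c + α - k by ring]
    rw [sum_congr rfl hpascal, sum_add_distrib, sum_choose_mul_factorial_div_poch_succ α hc,
      sum_range_succ _ α, Nat.choose_succ_self, ih (by linarith), sum_range_succ']
    push_cast
    simp only [add_zero, zero_mul, zero_div, add_assoc, add_comm (1 : ℝ)]
    ring

lemma digamma_add_one {t : ℝ} (ht : 0 < t) : digamma (t + 1) = digamma t + 1 / t := by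
  have hΓ : DifferentiableAt ℝ Gamma t :=
    differentiableAt_Gamma fun m => by linarith [(m.cast_nonneg : (0 : ℝ) ≤ m)]
  have hderiv : deriv Gamma (t + 1) = Gamma t + t * deriv Gamma t := by
    have hrec : (fun y => Gamma (y + 1)) =ᶠ[nhds t] fun y => y * Gamma y :=
      (eventually_ne_nhds ht.ne').mono fun y hy => Gamma_add_one hy
    rw [← deriv_comp_add_const, hrec.deriv_eq, deriv_fun_mul differentiableAt_fun_id hΓ]
    simp
  have := (Gamma_pos_of_pos ht).ne'
  unfold digamma
  rw [hderiv, Gamma_add_one ht.ne']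
  field_simp
  ring

lemma digamma_add_nat_sub_digamma {c : ℝ} (hc : 0 < c) (α : ℕ) :
    digamma (c + α) - digamma c = ∑ j ∈ range α, 1 / (c + j) := by
  induction α with
  | zero => simp
  | succ α ih =>
    rw [sum_range_succ, ← ih, Nat.cast_succ, ← add_assoc, digamma_add_one (by positivity)]
    ring

lemma hasSum_poch_succ_div_mul_pow (m : ℕ) {x : ℝ} (hx : |x| < 1) :
    HasSum (fun n : ℕ => poch (n + 1) (m + 1) / (n + 1) * x ^ (n + 1))
      (m ! * ((1 - x)⁻¹ ^ (m + 1) - 1)) := by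
  have hgeom := hasSum_choose_mul_geometric_of_norm_lt_one m (r := x) hx
  rw [← hasSum_nat_add_iff' 1] at hgeom
  have hterm : ∀ n : ℕ, poch (n + 1) (m + 1) / (n + 1) * x ^ (n + 1)
      = m ! * ((n + 1 + m).choose m * x ^ (n + 1)) := by
    intro n
    have := poch_natCast_add_one (n + 1) m
    push_cast at this ⊢
    rw [add_comm m, poch_add, poch_one, Nat.cast_one, this]
    field_simp
  have hval : (1 - x)⁻¹ ^ (m + 1) - 1
      = 1 / (1 - x) ^ (m + 1) - ∑ i ∈ range 1, ((i + m).choose m : ℝ) * x ^ i := by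
    simp [inv_pow]
  simp only [hterm, hval]
  exact hgeom.mul_left _

lemma sum_Icc_one_eq_sum_range {M : Type*} [AddCommMonoid M] (f : ℕ → M) (n : ℕ) :
    ∑ i ∈ Icc 1 n, f i = ∑ k ∈ range n, f (k + 1) := by
  rw [range_eq_Ico, sum_Ico_add' f 0 n 1, zero_add, Ico_add_one_right_eq_Icc]

/-- For integer `α ≥ 0` and real `β > −1`, `0 ≤ x < 1`, the series
`Σ_{n=1}^∞ ((α+β+1)_n/(n·(β+1)_n)) x^n` converges and equals
`Σ_{ℓ=1}^{α} C(α,ℓ)·(ℓ−1)!/((β+α+1−ℓ)_ℓ)·(1−x)^{−ℓ} − log(1−x) − (ψ(β+α+1) − ψ(β+1))`. -/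
theorem stmt5 (α : ℕ) (β : ℝ) (hβ : -1 < β) (x : ℝ) (hx0 : 0 ≤ x) (hx1 : x < 1) :
    HasSum
      (fun n : ℕ =>
        poch ((α : ℝ) + β + 1) (n + 1) / (((n : ℝ) + 1) * poch (β + 1) (n + 1)) * x ^ (n + 1))
      (∑ ℓ ∈ Finset.Icc 1 α,
          (α.choose ℓ : ℝ) * ((ℓ - 1).factorial : ℝ) / poch (β + α + 1 - ℓ) ℓ *
            (1 - x) ^ (-(ℓ : ℤ))
        - Real.log (1 - x) - (digamma (β + α + 1) - digamma (β + 1))) := by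
  have hx : |x| < 1 := abs_lt.mpr ⟨by linarith, hx1⟩
  have hb : 0 < β + 1 := by linarith
  rw [show (α : ℝ) + β + 1 = α + (β + 1) by ring, show β + α + 1 = β + 1 + α by ring,
    digamma_add_nat_sub_digamma hb, ← sum_choose_succ_mul_factorial_div_poch α hb,
    sum_Icc_one_eq_sum_range]
  generalize β + 1 = b at hb ⊢
  set w : ℕ → ℝ := fun ℓ => α.choose ℓ / poch (b + α - ℓ) ℓ with hw
  have hterm : ∀ n : ℕ, poch (α + b) (n + 1) / ((n + 1) * poch b (n + 1)) * x ^ (n + 1)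
      = ∑ k ∈ range α, w (k + 1) * (poch (n + 1) (k + 1) / (n + 1) * x ^ (n + 1))
        + x ^ (n + 1) / (n + 1) := by
    intro n
    have := poch_natCast_add_div_poch α (n + 1) hb
    push_cast at this
    rw [div_mul_eq_div_div_swap, this, sum_range_succ', add_div, add_mul, sum_div, sum_mul]
    simp only [hw, Nat.cast_succ, poch_zero, Nat.choose_zero_right, CharP.cast_eq_zero, sub_zero,
      div_one]
    congr 1
    · exact sum_congr rfl fun k _ => by ring
    · ring
  simp only [hterm]
  rw [sub_right_comm, ← sum_sub_distrib, sub_eq_add_neg]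
  refine .add (hasSum_sum fun k _ => ?_) (hasSum_pow_div_log_of_abs_lt_one hx)
  refine (congrArg (HasSum _) ?_).mp ((hasSum_poch_succ_div_mul_pow k hx).mul_left (w (k + 1)))
  rw [zpow_neg, zpow_natCast, Nat.add_sub_cancel, hw, inv_pow]
  push_cast
  ring
end

section
/- Let α, β > −1 be real, n ≥ 1 an integer, and s a real number. The function θ ↦ sin(θ)^{−s} · ( P_n^{(α+1,β)}(1)² − P_n^{(α+1,β)}(cos(2θ))² ) on (0, π/2) is integrable with respect to ν^{(α,β)} if and only if s < 2α + 4. (Since the dimension of the associated projective space is D = 2α+2, this says the expected chordal Riesz s-energy of the harmonic ensemble is finite if and only if s < D + 2.) -/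
open MeasureTheory Finset Real

/-- The Jacobi polynomial `P_n^{(α,β)}`, via its standard explicit expansion
(equivalent to Rodrigues' formula). -/
noncomputable def jacobiP (α β : ℝ) (n : ℕ) (t : ℝ) : ℝ :=
  ∑ k ∈ Finset.range (n + 1),
    poch (α + k + 1) (n - k) / ((n - k).factorial : ℝ) *
      (poch (β + (n - k) + 1) k / (k.factorial : ℝ)) *
      ((t - 1) / 2) ^ k * ((t + 1) / 2) ^ (n - k)

/-- The probability measure `ν^{(α,β)}` on `[0, π/2]` with density
`γ_{α,β}⁻¹ sin(θ)^{2α+1} cos(θ)^{2β+1}`, where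
`γ_{α,β} = Γ(α+1)Γ(β+1)/(2Γ(α+β+2))`. -/
noncomputable def nuMeasure (α β : ℝ) : Measure ℝ :=
  (volume.restrict (Set.Ioo 0 (π / 2))).withDensity fun θ =>
    ENNReal.ofReal (2 * Real.Gamma (α + β + 2) / (Real.Gamma (α + 1) * Real.Gamma (β + 1)) *
      Real.sin θ ^ (2 * α + 1) * Real.cos θ ^ (2 * β + 1))

/-! With `u = sin² θ` we have `cos 2θ = 1 - 2u`, and `q(u) = P(1)² - P(1 - 2u)²` vanishes at
`u = 0` with `q'(0) = 4 P(1) P'(1) > 0`; hence `q(u) = u Q(u)` with `Q` continuous and `Q(0) > 0`.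
Against the density of `ν^{(α,β)}` the integrand becomes a positive multiple of
`sin^{2α+3-s} θ · cos^{2β+1} θ · Q(sin² θ)`. Near `π/2` this is integrable because `2β + 1 > -1`;
near `0` it is comparable to `θ^{2α+3-s}`, which is integrable iff `2α + 3 - s > -1`. -/

open Set

lemma exists_eq_mul_continuous_of_hasDerivAt {f : ℝ → ℝ} {f' : ℝ} (hf : Continuous f)
    (hf0 : f 0 = 0) (hf' : HasDerivAt f f' 0) :
    ∃ Q : ℝ → ℝ, Continuous Q ∧ Q 0 = f' ∧ ∀ u, f u = u * Q u := by
  refine ⟨dslope f 0, ?_, by rw [dslope_same, hf'.deriv], fun u => ?_⟩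
  · exact continuousOn_univ.mp
      ((continuousOn_dslope Filter.univ_mem).mpr ⟨hf.continuousOn, hf'.differentiableAt⟩)
  · simpa [hf0] using (sub_smul_dslope f 0 u).symm

lemma intervalIntegrable_rpow_mul_iff {G : ℝ → ℝ} {a δ : ℝ} (hδ : 0 < δ)
    (hG : ContinuousOn G (Icc 0 δ)) (hG0 : G 0 ≠ 0) :
    IntervalIntegrable (fun x => x ^ a * G x) volume 0 δ ↔ -1 < a := by
  refine ⟨fun h => ?_, fun ha => ?_⟩
  · obtain ⟨ε, hε, hεδ, hGε⟩ : ∃ ε, 0 < ε ∧ ε ≤ δ ∧ ∀ x ∈ Icc 0 ε, G x ≠ 0 := by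
      have hne := (hG.continuousWithinAt (left_mem_Icc.2 hδ.le)).eventually_ne hG0
      rw [nhdsWithin_Icc_eq_nhdsGE hδ, Filter.Eventually, mem_nhdsGE_iff_exists_Icc_subset] at hne
      obtain ⟨u, hu, hsub⟩ := hne
      exact ⟨min u δ, lt_min hu hδ, min_le_right _ _, fun x hx =>
        hsub ⟨hx.1, hx.2.trans (min_le_left _ _)⟩⟩
    have hGε' : ContinuousOn (fun x => (G x)⁻¹) (uIcc 0 ε) := by
      rw [uIcc_of_le hε.le]
      exact (hG.mono (Icc_subset_Icc_right hεδ)).inv₀ hGε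
    have hprod := (h.mono_set (uIcc_subset_uIcc_left (mem_uIcc_of_le hε.le hεδ))).mul_continuousOn
      hGε'
    rw [← intervalIntegral.integrableOn_Ioo_rpow_iff hε,
      ← intervalIntegrable_iff_integrableOn_Ioo_of_le hε.le]
    refine (intervalIntegrable_congr_uIoo fun x hx => ?_).mp hprod
    rw [uIoo_of_le hε.le] at hx
    simp [hGε x (Ioo_subset_Icc_self hx)]
  · exact (intervalIntegral.intervalIntegrable_rpow' ha).mul_continuousOn
      (by rwa [uIcc_of_le hδ.le])

lemma sinc_pos_of_mem_Ico {x : ℝ} (hx : x ∈ Ico 0 π) : 0 < sinc x := by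
  rcases hx.1.eq_or_lt with rfl | hx0
  · simp
  · rw [sinc_of_ne_zero hx0.ne']
    exact div_pos (sin_pos_of_pos_of_lt_pi hx0 hx.2) hx0

lemma intervalIntegrable_sin_rpow_mul_iff_rpow_mul {H : ℝ → ℝ} {a δ : ℝ} (hδ : 0 ≤ δ)
    (hδπ : δ < π) :
    IntervalIntegrable (fun x => sin x ^ a * H x) volume 0 δ ↔
      IntervalIntegrable (fun x => x ^ a * (sinc x ^ a * H x)) volume 0 δ := by
  refine intervalIntegrable_congr_uIoo fun x hx => ?_
  rw [uIoo_of_le hδ] at hx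
  have hsinc := sinc_pos_of_mem_Ico ⟨hx.1.le, hx.2.trans hδπ⟩
  rw [← mul_assoc, ← mul_rpow hx.1.le hsinc.le, sinc_of_ne_zero hx.1.ne',
    mul_div_cancel₀ _ hx.1.ne']

lemma continuousOn_sinc_rpow {δ : ℝ} (a : ℝ) (hδπ : δ < π) :
    ContinuousOn (fun x => sinc x ^ a) (Icc 0 δ) :=
  continuous_sinc.continuousOn.rpow_const fun _ hx =>
    Or.inl (sinc_pos_of_mem_Ico ⟨hx.1, hx.2.trans_lt hδπ⟩).ne'

lemma intervalIntegrable_sin_rpow_mul_iff {H : ℝ → ℝ} {a δ : ℝ} (hδ : 0 < δ) (hδπ : δ < π)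
    (hH : ContinuousOn H (Icc 0 δ)) (hH0 : H 0 ≠ 0) :
    IntervalIntegrable (fun x => sin x ^ a * H x) volume 0 δ ↔ -1 < a := by
  rw [intervalIntegrable_sin_rpow_mul_iff_rpow_mul hδ.le hδπ]
  exact intervalIntegrable_rpow_mul_iff hδ ((continuousOn_sinc_rpow a hδπ).mul hH)
    (by simpa using hH0)

lemma intervalIntegrable_sin_rpow_mul {H : ℝ → ℝ} {a δ : ℝ} (ha : -1 < a) (hδ : 0 ≤ δ)
    (hδπ : δ < π) (hH : ContinuousOn H (Icc 0 δ)) :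
    IntervalIntegrable (fun x => sin x ^ a * H x) volume 0 δ := by
  rw [intervalIntegrable_sin_rpow_mul_iff_rpow_mul hδ hδπ]
  exact (intervalIntegral.intervalIntegrable_rpow' ha).mul_continuousOn
    (by rw [uIcc_of_le hδ]; exact (continuousOn_sinc_rpow a hδπ).mul hH)

lemma integrableOn_sin_rpow_mul_cos_rpow_mul_iff {Q : ℝ → ℝ} (hQ : Continuous Q) (hQ0 : Q 0 ≠ 0)
    {a b : ℝ} (hb : -1 < b) :
    IntegrableOn (fun θ => sin θ ^ a * cos θ ^ b * Q (sin θ ^ 2)) (Ioo 0 (π / 2)) ↔ -1 < a := by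
  have hπ := pi_pos
  have hcos : ∀ (c : ℝ) (g : ℝ → ℝ), Continuous g →
      ContinuousOn (fun θ => cos θ ^ c * Q (g θ)) (Icc 0 (π / 4)) := fun c g hg =>
    (continuous_cos.continuousOn.rpow_const fun θ hθ => Or.inl
      (cos_pos_of_mem_Ioo ⟨by linarith [hθ.1], by linarith [hθ.2]⟩).ne').mul
      (hQ.comp hg).continuousOn
  have h_left : IntervalIntegrable (fun θ => sin θ ^ a * cos θ ^ b * Q (sin θ ^ 2)) volume 0
      (π / 4) ↔ -1 < a := by
    simp_rw [mul_assoc]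
    exact intervalIntegrable_sin_rpow_mul_iff (by positivity) (by linarith)
      (hcos b (fun θ => sin θ ^ 2) (by fun_prop)) (by simpa using hQ0)
  have h_right : IntervalIntegrable (fun θ => sin θ ^ a * cos θ ^ b * Q (sin θ ^ 2)) volume
      (π / 4) (π / 2) := by
    rw [← IntervalIntegrable.comp_sub_left_iff (π / 2), IntervalIntegrable.symm_iff]
    have := intervalIntegrable_sin_rpow_mul hb (by positivity) (by linarith)
      (hcos a (fun θ => cos θ ^ 2) (by fun_prop))
    convert this using 2
    · simp only [sin_pi_div_two_sub, cos_pi_div_two_sub]; ring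
    all_goals ring
  rw [← intervalIntegrable_iff_integrableOn_Ioo_of_le (by positivity)]
  refine ⟨fun h => h_left.mp (h.mono_set ?_), fun ha => (h_left.mpr ha).trans h_right⟩
  exact uIcc_subset_uIcc_left (mem_uIcc_of_le (by positivity) (by linarith))

noncomputable def jacobiCoeff (α β : ℝ) (n k : ℕ) : ℝ :=
  poch (α + k + 1) (n - k) / ((n - k).factorial : ℝ) *
    (poch (β + (n - k) + 1) k / (k.factorial : ℝ))

lemma jacobiP_eq_sum (α β : ℝ) (n : ℕ) (t : ℝ) :
    jacobiP α β n t = ∑ k ∈ range (n + 1),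
      jacobiCoeff α β n k * (((t - 1) / 2) ^ k * ((t + 1) / 2) ^ (n - k)) := by
  simp only [jacobiP, jacobiCoeff, mul_assoc]

lemma jacobiCoeff_pos {α β : ℝ} (hα : -1 < α) (hβ : -1 < β) {n k : ℕ} (hk : k ≤ n) :
    0 < jacobiCoeff α β n k := by
  have hkn : (k : ℝ) ≤ n := by exact_mod_cast hk
  unfold jacobiCoeff poch
  have := ascPochhammer_pos (n - k) (α + k + 1) (by linarith [k.cast_nonneg (α := ℝ)])
  have := ascPochhammer_pos k (β + (n - k) + 1) (by linarith)
  positivity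

lemma jacobiP_one (α β : ℝ) (n : ℕ) : jacobiP α β n 1 = jacobiCoeff α β n 0 := by
  rw [jacobiP_eq_sum, sum_eq_single 0 (fun k _ hk => by simp [hk]) (by simp)]
  simp

lemma differentiable_jacobiP (α β : ℝ) (n : ℕ) : Differentiable ℝ (jacobiP α β n) := by
  unfold jacobiP
  fun_prop

-- Since `0 ^ 0 = 1`, the derivative is `m / 2` for `k = 0`, `1 / 2` for `k = 1` and `0` otherwise.
lemma hasDerivAt_half_sub_one_pow_mul_half_add_one_pow (k m : ℕ) :
    HasDerivAt (fun t : ℝ => ((t - 1) / 2) ^ k * ((t + 1) / 2) ^ m)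
      ((k * 0 ^ (k - 1) + m * 0 ^ k) / 2) 1 := by
  have hsub : HasDerivAt (fun t : ℝ => (t - 1) / 2) (1 / 2) 1 :=
    ((hasDerivAt_id 1).sub_const 1).div_const 2
  have hadd : HasDerivAt (fun t : ℝ => (t + 1) / 2) (1 / 2) 1 :=
    ((hasDerivAt_id 1).add_const 1).div_const 2
  refine ((hsub.fun_pow k).fun_mul (hadd.fun_pow m)).congr_deriv ?_
  norm_num
  ring

lemma deriv_jacobiP_one_pos {α β : ℝ} (hα : -1 < α) (hβ : -1 < β) {n : ℕ} (hn : 1 ≤ n) :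
    0 < deriv (jacobiP α β n) 1 := by
  have h := HasDerivAt.fun_sum fun k (_ : k ∈ range (n + 1)) =>
    (hasDerivAt_half_sub_one_pow_mul_half_add_one_pow k (n - k)).const_mul (jacobiCoeff α β n k)
  rw [show jacobiP α β n = _ from funext (jacobiP_eq_sum α β n), h.deriv]
  refine sum_pos' (fun k hk => ?_) ⟨0, by simp, ?_⟩
  · have := jacobiCoeff_pos hα hβ (Nat.lt_succ_iff.mp (mem_range.mp hk))
    positivity
  · have := jacobiCoeff_pos hα hβ (Nat.zero_le n)
    have : (0 : ℝ) < n := by exact_mod_cast hn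
    simp only [CharP.cast_eq_zero, zero_mul, Nat.sub_zero, pow_zero, mul_one, zero_add]
    positivity

lemma exists_jacobiP_one_sq_sub_sq_eq_mul {α β : ℝ} (hα : -1 < α) (hβ : -1 < β) {n : ℕ}
    (hn : 1 ≤ n) : ∃ Q : ℝ → ℝ, Continuous Q ∧ 0 < Q 0 ∧
      ∀ u, jacobiP α β n 1 ^ 2 - jacobiP α β n (1 - 2 * u) ^ 2 = u * Q u := by
  have hP := differentiable_jacobiP α β n
  have hderiv : HasDerivAt (fun u => jacobiP α β n 1 ^ 2 - jacobiP α β n (1 - 2 * u) ^ 2)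
      (4 * jacobiP α β n 1 * deriv (jacobiP α β n) 1) 0 := by
    have hlin : HasDerivAt (fun u : ℝ => 1 - 2 * u) (-2) 0 := by
      simpa using ((hasDerivAt_id (0 : ℝ)).const_mul 2).const_sub 1
    refine ((((hP _).hasDerivAt.comp 0 hlin).fun_pow 2).const_sub _).congr_deriv ?_
    norm_num
    ring
  obtain ⟨Q, hQ, hQ0, hfQ⟩ := exists_eq_mul_continuous_of_hasDerivAt
    (by have := hP.continuous; fun_prop) (by simp) hderiv
  refine ⟨Q, hQ, ?_, hfQ⟩
  rw [hQ0, jacobiP_one]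
  have := jacobiCoeff_pos hα hβ (Nat.zero_le n)
  have := deriv_jacobiP_one_pos hα hβ hn
  positivity

/-- The expected chordal Riesz `s`-energy of the harmonic ensemble is finite
iff `s < D + 2 = 2α + 4`. -/
theorem stmt10 (α β : ℝ) (hα : -1 < α) (hβ : -1 < β) (n : ℕ) (hn : 1 ≤ n) (s : ℝ) :
    MeasureTheory.Integrable
        (fun θ => Real.sin θ ^ (-s) *
          (jacobiP (α + 1) β n 1 ^ 2 - jacobiP (α + 1) β n (Real.cos (2 * θ)) ^ 2))
        (nuMeasure α β)
      ↔ s < 2 * α + 4 := by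
  obtain ⟨Q, hQ, hQ0, hPQ⟩ := exists_jacobiP_one_sq_sub_sq_eq_mul (α := α + 1) (by linarith) hβ hn
  set c := 2 * Gamma (α + β + 2) / (Gamma (α + 1) * Gamma (β + 1))
  have hc : 0 < c := by
    have := Gamma_pos_of_pos (show 0 < α + β + 2 by linarith)
    have := Gamma_pos_of_pos (show 0 < α + 1 by linarith)
    have := Gamma_pos_of_pos (show 0 < β + 1 by linarith)
    positivity
  have h_integrand : EqOn
      (fun θ => sin θ ^ (-s) *
        (jacobiP (α + 1) β n 1 ^ 2 - jacobiP (α + 1) β n (cos (2 * θ)) ^ 2) *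
        (ENNReal.ofReal (c * sin θ ^ (2 * α + 1) * cos θ ^ (2 * β + 1))).toReal)
      (fun θ => sin θ ^ (2 * α + 3 - s) * cos θ ^ (2 * β + 1) * (c * Q (sin θ ^ 2)))
      (Ioo 0 (π / 2)) := by
    intro θ hθ
    have hsin : 0 < sin θ := sin_pos_of_pos_of_lt_pi hθ.1 (by linarith [hθ.2, pi_pos])
    have hcos : 0 < cos θ := cos_pos_of_mem_Ioo ⟨by linarith [hθ.1, pi_pos], hθ.2⟩
    have hexp : sin θ ^ (2 * α + 3 - s) = sin θ ^ (-s) * sin θ ^ 2 * sin θ ^ (2 * α + 1) := by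
      rw [← rpow_natCast, ← rpow_add hsin, ← rpow_add hsin]
      congr 1
      push_cast
      ring
    dsimp only
    rw [ENNReal.toReal_ofReal (by positivity), cos_two_mul_eq_one_sub, hPQ, hexp]
    ring
  rw [nuMeasure,
    integrable_withDensity_iff (by fun_prop) (ae_of_all _ fun _ => ENNReal.ofReal_lt_top),
    ← IntegrableOn, integrableOn_congr_fun h_integrand measurableSet_Ioo,
    integrableOn_sin_rpow_mul_cos_rpow_mul_iff (hQ.const_mul c) (by positivity) (by linarith)]
  constructor <;> intro <;> linarith
end
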